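/- arXiv:1501.06056 — 6 statements merged into one kernel-verified Lean document; each statement's English description precedes it below -/
import Mathlib

section
/- Let C be a v_k-configuration containing a set Q of k points and a set M of k lines with a bijection f: Q → M such that (i) each point q ∈ Q is incident with the line f(q), (ii) any two points q, q' ∈ Q are either not collinear, or collinear only on the line f(q) or on the line f(q'), and (iii) any two lines m, m' ∈ M either do not meet, or meet only in the point f⁻¹(m) or in the point f⁻¹(m'). Then the incidence structure obtained by adding a new point p and a new line l, and replacing each incidence (q, f(q)) for q ∈ Q by the incidences (p, f(q)) and (q, l), is a (v+1)_k-configuration. -/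
/-- A combinatorial `(v_r, b_k)`-configuration. -/
structure Config (P L : Type) (r k : ℕ) where
  I : P → L → Prop
  plinear : ∀ p q : P, p ≠ q → ∀ l m : L, I p l → I q l → I p m → I q m → l = m
  pointDeg : ∀ p : P, {l : L | I p l}.ncard = r
  lineDeg : ∀ l : L, {p : P | I p l}.ncard = k

/-- the balanced augmentation construction. Given a `v_k`-configuration
with a set `Q` of `k` points, a set `M` of `k` lines, and a bijection `f : Q → M`
with `q` on `f q`, such that points of `Q` are collinear only on their `f`-images and
lines of `M` meet only in their `f`-preimages, adding a new point `p` (modelled by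
`none : Option P`) and a new line `l` (modelled by `none : Option L`) and replacing
each incidence `(q, f q)`, `q ∈ Q`, by the incidences `(p, f q)` and `(q, l)` yields
a `(v+1)_k`-configuration. -/
theorem balanced_augmentation {P L : Type} [Fintype P] [Fintype L] {k : ℕ}
    (C : Config P L k k) (hbal : Fintype.card P = Fintype.card L)
    (Q : Set P) (M : Set L) (hQ : Q.ncard = k) (hM : M.ncard = k)
    (f : P → L) (hbij : Set.BijOn f Q M)
    (hinc : ∀ q ∈ Q, C.I q (f q))
    (hpts : ∀ q ∈ Q, ∀ q' ∈ Q, q ≠ q' → ∀ l, C.I q l → C.I q' l → l = f q ∨ l = f q')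
    (hlns : ∀ q ∈ Q, ∀ q' ∈ Q, q ≠ q' → ∀ x, C.I x (f q) → C.I x (f q') → x = q ∨ x = q') :
    ∃ C' : Config (Option P) (Option L) k k,
      (∀ x m, C'.I (some x) (some m) ↔ (C.I x m ∧ ¬ (x ∈ Q ∧ m = f x))) ∧
      (∀ m, C'.I none (some m) ↔ m ∈ M) ∧
      (∀ x, C'.I (some x) none ↔ x ∈ Q) ∧
      ¬ C'.I none none ∧
      Fintype.card (Option P) = Fintype.card P + 1 ∧
      Fintype.card (Option L) = Fintype.card L + 1 := by
  classical
  set I' : Option P → Option L → Prop := fun p l =>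
    match p, l with
    | some x, some m => C.I x m ∧ ¬ (x ∈ Q ∧ m = f x)
    | none, some m => m ∈ M
    | some x, none => x ∈ Q
    | none, none => False with hI'
  have hfM : ∀ q ∈ Q, f q ∈ M := hbij.mapsTo
  -- partial linearity
  have hpl : ∀ p q : Option P, p ≠ q → ∀ l m : Option L,
      I' p l → I' q l → I' p m → I' q m → l = m := by
    rintro (_ | x) (_ | y) hne (_ | l) (_ | m) h1 h2 h3 h4
    -- p = none, q = none (4 cases): contradiction
    · exact absurd rfl hne
    · exact absurd rfl hne
    · exact absurd rfl hne
    · exact absurd rfl hne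
    -- p = none, q = some y
    · rfl
    · exact h1.elim
    · exact h3.elim
    · -- both lines some
      obtain ⟨q, hqQ, hql⟩ := hbij.surjOn h1
      obtain ⟨q', hq'Q, hq'm⟩ := hbij.surjOn h3
      subst hql; subst hq'm
      by_cases hqq : q = q'
      · rw [hqq]
      · rcases hlns q hqQ q' hq'Q hqq y h2.1 h4.1 with h | h
        · subst h; exact absurd ⟨hqQ, rfl⟩ h2.2
        · subst h; exact absurd ⟨hq'Q, rfl⟩ h4.2
    -- p = some x, q = none
    · rfl
    · exact h2.elim
    · exact h4.elim
    · obtain ⟨q, hqQ, hql⟩ := hbij.surjOn h2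
      obtain ⟨q', hq'Q, hq'm⟩ := hbij.surjOn h4
      subst hql; subst hq'm
      by_cases hqq : q = q'
      · rw [hqq]
      · rcases hlns q hqQ q' hq'Q hqq x h1.1 h3.1 with h | h
        · subst h; exact absurd ⟨hqQ, rfl⟩ h1.2
        · subst h; exact absurd ⟨hq'Q, rfl⟩ h3.2
    -- p = some x, q = some y
    · rfl
    · -- l = none, m = some m
      have hxy : x ≠ y := fun h => hne (by rw [h])
      rcases hpts x h1 y h2 hxy m h3.1 h4.1 with h | h
      · exact absurd ⟨h1, h⟩ h3.2
      · exact absurd ⟨h2, h⟩ h4.2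
    · -- l = some l, m = none
      have hxy : x ≠ y := fun h => hne (by rw [h])
      rcases hpts x h3 y h4 hxy l h1.1 h2.1 with h | h
      · exact absurd ⟨h3, h⟩ h1.2
      · exact absurd ⟨h4, h⟩ h2.2
    · have hxy : x ≠ y := fun h => hne (by rw [h])
      exact congrArg some (C.plinear x y hxy l m h1.1 h2.1 h3.1 h4.1)
  -- point degrees
  have hpd : ∀ p : Option P, {l : Option L | I' p l}.ncard = k := by
    rintro (_ | x)
    · have : {l : Option L | I' none l} = some '' M := by
        ext (_ | m)
        · simp [hI']
        · simp [hI']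
      rw [this, Set.ncard_image_of_injective _ (Option.some_injective _), hM]
    · by_cases hxQ : x ∈ Q
      · have hset : {l : Option L | I' (some x) l}
            = insert none (some '' ({m | C.I x m} \ {f x})) := by
          ext (_ | m)
          · simp [hI', hxQ]
          · simp only [hI', Set.mem_setOf_eq, Set.mem_insert_iff, Set.mem_image,
              Set.mem_diff, Set.mem_singleton_iff]
            constructor
            · rintro ⟨h1, h2⟩
              exact Or.inr ⟨m, ⟨h1, fun h => h2 ⟨hxQ, h⟩⟩, rfl⟩
            · rintro (h | ⟨m', ⟨h1, h2⟩, h3⟩)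
              · exact absurd h (by simp)
              · cases Option.some_injective _ h3
                exact ⟨h1, fun h => h2 h.2⟩
        have hmem : f x ∈ {m | C.I x m} := hinc x hxQ
        have hkpos : 0 < k := by
          rw [← C.pointDeg x]
          exact (Set.ncard_pos (Set.toFinite _)).mpr ⟨f x, hmem⟩
        rw [hset, Set.ncard_insert_of_notMem (by simp),
          Set.ncard_image_of_injective _ (Option.some_injective _),
          Set.ncard_diff_singleton_of_mem hmem, C.pointDeg x]
        omega
      · have hset : {l : Option L | I' (some x) l} = some '' {m | C.I x m} := by
          ext (_ | m)
          · simp [hI', hxQ]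
          · simp [hI', hxQ]
        rw [hset, Set.ncard_image_of_injective _ (Option.some_injective _), C.pointDeg x]
  -- line degrees
  have hld : ∀ l : Option L, {p : Option P | I' p l}.ncard = k := by
    rintro (_ | m)
    · have : {p : Option P | I' p none} = some '' Q := by
        ext (_ | x)
        · simp [hI']
        · simp [hI']
      rw [this, Set.ncard_image_of_injective _ (Option.some_injective _), hQ]
    · by_cases hmM : m ∈ M
      · obtain ⟨q, hqQ, hqm⟩ := hbij.surjOn hmM
        have hset : {p : Option P | I' p (some m)}
            = insert none (some '' ({x | C.I x m} \ {q})) := by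
          ext (_ | x)
          · simp [hI', hmM]
          · simp only [hI', Set.mem_setOf_eq, Set.mem_insert_iff, Set.mem_image,
              Set.mem_diff, Set.mem_singleton_iff]
            constructor
            · rintro ⟨h1, h2⟩
              refine Or.inr ⟨x, ⟨h1, fun h => h2 ?_⟩, rfl⟩
              subst h; exact ⟨hqQ, hqm.symm⟩
            · rintro (h | ⟨x', ⟨h1, h2⟩, h3⟩)
              · exact absurd h (by simp)
              · cases Option.some_injective _ h3
                refine ⟨h1, fun h => h2 ?_⟩
                exact hbij.injOn h.1 hqQ (h.2 ▸ hqm.symm)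
        have hmem : q ∈ {x | C.I x m} := hqm ▸ hinc q hqQ
        have hkpos : 0 < k := by
          rw [← C.lineDeg m]
          exact (Set.ncard_pos (Set.toFinite _)).mpr ⟨q, hmem⟩
        rw [hset, Set.ncard_insert_of_notMem (by simp),
          Set.ncard_image_of_injective _ (Option.some_injective _),
          Set.ncard_diff_singleton_of_mem hmem, C.lineDeg m]
        omega
      · have hset : {p : Option P | I' p (some m)} = some '' {x | C.I x m} := by
          ext (_ | x)
          · simp [hI', hmM]
          · simp only [hI', Set.mem_setOf_eq, Set.mem_image]
            constructor
            · rintro ⟨h1, _⟩; exact ⟨x, h1, rfl⟩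
            · rintro ⟨x', h1, h3⟩
              cases Option.some_injective _ h3
              exact ⟨h1, fun h => hmM (h.2 ▸ hfM _ h.1)⟩
        rw [hset, Set.ncard_image_of_injective _ (Option.some_injective _), C.lineDeg m]
  refine ⟨⟨I', hpl, hpd, hld⟩, fun x m => Iff.rfl, fun m => Iff.rfl, fun x => Iff.rfl,
    fun h => h, ?_, ?_⟩ <;> simp [Fintype.card_option]
end

section
/- Every v_3-configuration admits a Martinetti-type augmentation: it contains three points Q = {q1, q2, q3} and three lines M = {m1, m2, m3} with a bijection f(q_i) = m_i, each q_i on m_i, such that any two points of Q are collinear only via lines of M (if at all), and any two lines of M meet only in points of Q (if at all). -/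
lemma exists_not_mem_pair {α : Type} [Fintype α] (S : Set α) (hS : S.ncard = 3) (a b : α) :
    ∃ c ∈ S, c ≠ a ∧ c ≠ b := by
  by_contra h
  push_neg at h
  have hsub : S ⊆ {a, b} := by
    intro x hx
    rcases eq_or_ne x a with rfl | hxa
    · exact Set.mem_insert _ _
    · exact Set.mem_insert_iff.mpr (Or.inr (h x hx hxa))
  have h1 := Set.ncard_le_ncard hsub (Set.toFinite _)
  have h2 : ({a, b} : Set α).ncard ≤ 2 :=
    (Set.ncard_insert_le _ _).trans (by simp [Set.ncard_singleton])
  omega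

/-- A triangle in a configuration. -/
def HasTriangle {P L : Type} (C : Config P L 3 3) : Prop :=
  ∃ x y z : P, ∃ l1 l2 l3 : L, x ≠ y ∧ y ≠ z ∧ x ≠ z ∧ l1 ≠ l2 ∧ l1 ≠ l3 ∧ l2 ≠ l3 ∧
    C.I x l1 ∧ C.I y l1 ∧ C.I y l2 ∧ C.I z l2 ∧ C.I z l3 ∧ C.I x l3

/-- every `v_3`-configuration admits a Martinetti-type augmentation:
three distinct points `Q = {q1, q2, q3}` and three distinct lines `M = {m1, m2, m3}`
with `q_i` on `m_i`, such that any two points of `Q` are collinear only via lines of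
`M` (if at all), and any two lines of `M` meet only in points of `Q` (if at all). -/
theorem v3_augmentable {P L : Type} [Fintype P] [Fintype L] [Nonempty P]
    (C : Config P L 3 3) (hbal : Fintype.card P = Fintype.card L) :
    ∃ q1 q2 q3 : P, ∃ m1 m2 m3 : L,
      q1 ≠ q2 ∧ q1 ≠ q3 ∧ q2 ≠ q3 ∧ m1 ≠ m2 ∧ m1 ≠ m3 ∧ m2 ≠ m3 ∧
      C.I q1 m1 ∧ C.I q2 m2 ∧ C.I q3 m3 ∧
      (∀ x ∈ ({q1, q2, q3} : Set P), ∀ y ∈ ({q1, q2, q3} : Set P), x ≠ y →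
        ∀ l, C.I x l → C.I y l → l ∈ ({m1, m2, m3} : Set L)) ∧
      (∀ l ∈ ({m1, m2, m3} : Set L), ∀ m ∈ ({m1, m2, m3} : Set L), l ≠ m →
        ∀ x, C.I x l → C.I x m → x ∈ ({q1, q2, q3} : Set P)) := by
  by_cases ht : HasTriangle C
  · -- Triangle case: the triangle itself works.
    obtain ⟨x, y, z, l1, l2, l3, hxy, hyz, hxz, h12, h13, h23, hx1, hy1, hy2, hz2, hz3, hx3⟩ := ht
    refine ⟨x, y, z, l1, l2, l3, hxy, hxz, hyz, h12, h13, h23, hx1, hy2, hz3, ?_, ?_⟩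
    · intro p hp q hq hpq l hpl hql
      simp only [Set.mem_insert_iff, Set.mem_singleton_iff] at hp hq ⊢
      rcases hp with rfl | rfl | rfl <;> rcases hq with rfl | rfl | rfl <;>
      first
      | exact absurd rfl hpq
      | exact Or.inl (C.plinear _ _ hpq _ _ hpl hql hx1 hy1)
      | exact Or.inl (C.plinear _ _ hpq _ _ hpl hql hy1 hx1)
      | exact Or.inr (Or.inl (C.plinear _ _ hpq _ _ hpl hql hy2 hz2))
      | exact Or.inr (Or.inl (C.plinear _ _ hpq _ _ hpl hql hz2 hy2))
      | exact Or.inr (Or.inr (C.plinear _ _ hpq _ _ hpl hql hx3 hz3))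
      | exact Or.inr (Or.inr (C.plinear _ _ hpq _ _ hpl hql hz3 hx3))
    · intro u hu w hw huw p hpu hpw
      simp only [Set.mem_insert_iff, Set.mem_singleton_iff] at hu hw ⊢
      have key : ∀ (u w : L) (v : P), u ≠ w → C.I v u → C.I v w → C.I p u → C.I p w → p = v := by
        intro u w v huw hvu hvw hpu hpw
        by_contra h
        exact huw (C.plinear p v h u w hpu hvu hpw hvw)
      rcases hu with rfl | rfl | rfl <;> rcases hw with rfl | rfl | rfl <;>
      first
      | exact absurd rfl huw
      | exact Or.inr (Or.inl (key _ _ y huw hy1 hy2 hpu hpw))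
      | exact Or.inr (Or.inl (key _ _ y huw hy2 hy1 hpu hpw))
      | exact Or.inl (key _ _ x huw hx1 hx3 hpu hpw)
      | exact Or.inl (key _ _ x huw hx3 hx1 hpu hpw)
      | exact Or.inr (Or.inr (key _ _ z huw hz2 hz3 hpu hpw))
      | exact Or.inr (Or.inr (key _ _ z huw hz3 hz2 hpu hpw))
  · -- Triangle-free case: build a path of three lines.
    obtain ⟨a⟩ := ‹Nonempty P›
    have hA : {l : L | C.I a l}.ncard = 3 := C.pointDeg a
    have hAne : {l : L | C.I a l}.Nonempty := by
      rw [← Set.ncard_pos (Set.toFinite _)]; omega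
    obtain ⟨m1, ham1⟩ := hAne
    obtain ⟨m2, ham2, h21, -⟩ := exists_not_mem_pair _ hA m1 m1
    have h12 : m1 ≠ m2 := h21.symm
    have ham1 : C.I a m1 := ham1
    have ham2 : C.I a m2 := ham2
    obtain ⟨b, hbm2, hba, -⟩ := exists_not_mem_pair _ (C.lineDeg m2) a a
    have hbm2 : C.I b m2 := hbm2
    have hab : a ≠ b := hba.symm
    obtain ⟨m3, hbm3, h31, h32⟩ := exists_not_mem_pair _ (C.pointDeg b) m1 m2
    have hbm3 : C.I b m3 := hbm3
    obtain ⟨q1, hq1m1, hq1a, -⟩ := exists_not_mem_pair _ (C.lineDeg m1) a a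
    have hq1m1 : C.I q1 m1 := hq1m1
    have hbm1 : ¬ C.I b m1 := fun h => h12 (C.plinear b a hba m1 m2 h ham1 hbm2 ham2)
    have h13 : m1 ≠ m3 := fun h => hbm1 (h ▸ hbm3)
    have hq1b : q1 ≠ b := fun h => hbm1 (h ▸ hq1m1)
    have hq1m2 : ¬ C.I q1 m2 := fun h => h12 (C.plinear q1 a hq1a m1 m2 hq1m1 ham1 h ham2)
    have noncol : ∀ l, C.I q1 l → C.I b l → False := by
      intro l h1 h2
      exact ht ⟨q1, a, b, m1, m2, l, hq1a, hab, hq1b, h12,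
        fun h => hbm1 (h ▸ h2), fun h => hq1m2 (h ▸ h1),
        hq1m1, ham1, ham2, hbm2, h2, h1⟩
    have key12 : ∀ p, C.I p m1 → C.I p m2 → p = a := by
      intro p h1 h2
      by_contra h
      exact h12 (C.plinear p a h m1 m2 h1 ham1 h2 ham2)
    have key23 : ∀ p, C.I p m2 → C.I p m3 → p = b := by
      intro p h1 h2
      by_contra h
      exact h32 (C.plinear p b h m2 m3 h1 hbm2 h2 hbm3).symm
    have key13 : ∀ p, C.I p m1 → C.I p m3 → p = a := by
      intro p h1 h3
      by_contra hpa
      exact ht ⟨p, a, b, m1, m2, m3, hpa, hab, fun h => hbm1 (h ▸ h1), h12, h13, h32.symm,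
        h1, ham1, ham2, hbm2, hbm3, h3⟩
    refine ⟨q1, a, b, m1, m2, m3, hq1a, hq1b, hab, h12, h13, h32.symm,
      hq1m1, ham2, hbm3, ?_, ?_⟩
    · intro p hp q hq hpq l hpl hql
      simp only [Set.mem_insert_iff, Set.mem_singleton_iff] at hp hq ⊢
      rcases hp with rfl | rfl | rfl <;> rcases hq with rfl | rfl | rfl <;>
      first
      | exact absurd rfl hpq
      | exact Or.inl (C.plinear _ _ hpq _ _ hpl hql hq1m1 ham1)
      | exact Or.inl (C.plinear _ _ hpq _ _ hpl hql ham1 hq1m1)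
      | exact Or.inr (Or.inl (C.plinear _ _ hpq _ _ hpl hql ham2 hbm2))
      | exact Or.inr (Or.inl (C.plinear _ _ hpq _ _ hpl hql hbm2 ham2))
      | exact (noncol l hpl hql).elim
      | exact (noncol l hql hpl).elim
    · intro u hu w hw huw p hpu hpw
      simp only [Set.mem_insert_iff, Set.mem_singleton_iff] at hu hw ⊢
      rcases hu with rfl | rfl | rfl <;> rcases hw with rfl | rfl | rfl <;>
      first
      | exact absurd rfl huw
      | exact Or.inr (Or.inl (key12 p hpu hpw))
      | exact Or.inr (Or.inl (key12 p hpw hpu))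
      | exact Or.inr (Or.inl (key13 p hpu hpw))
      | exact Or.inr (Or.inl (key13 p hpw hpu))
      | exact Or.inr (Or.inr (key23 p hpu hpw))
      | exact Or.inr (Or.inr (key23 p hpw hpu))
end

section
/- There exists a v_3-configuration for every integer v ≥ 7. -/
private lemma keyNat (a b c d : ℕ) (ha : a = 0 ∨ a = 1 ∨ a = 3)
    (hb : b = 0 ∨ b = 1 ∨ b = 3) (hc : c = 0 ∨ c = 1 ∨ c = 3)
    (hd : d = 0 ∨ d = 1 ∨ d = 3) (hab : a ≠ b) (hcd : c ≠ d)
    (h : a + d = c + b) : a = c ∧ b = d := by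
  rcases ha with rfl|rfl|rfl <;> rcases hb with rfl|rfl|rfl <;>
    rcases hc with rfl|rfl|rfl <;> rcases hd with rfl|rfl|rfl <;> omega

private lemma castInj (n : ℕ) (x y : ℕ) (hx : x < n + 7) (hy : y < n + 7)
    (h : (x : ZMod (n + 7)) = y) : x = y := by
  have := congrArg ZMod.val h
  rwa [ZMod.val_cast_of_lt hx, ZMod.val_cast_of_lt hy] at this

private lemma auxConfig (n : ℕ) : Nonempty (Config (ZMod (n + 7)) (ZMod (n + 7)) 3 3) := by
  have hne : NeZero (n + 7) := ⟨by omega⟩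
  -- incidence: p on line l iff p ∈ {l, l+1, l+3}
  refine ⟨⟨fun p l => p = l ∨ p = l + 1 ∨ p = l + 3, ?_, ?_, ?_⟩⟩
  · intro p q hpq l m hpl hql hpm hqm
    -- extract nat offsets
    have hext : ∀ (x y : ZMod (n+7)), (x = y ∨ x = y + 1 ∨ x = y + 3) →
        ∃ a : ℕ, (a = 0 ∨ a = 1 ∨ a = 3) ∧ x = y + (a : ZMod (n+7)) := by
      rintro x y (rfl|rfl|rfl)
      · exact ⟨0, Or.inl rfl, by push_cast; ring⟩
      · exact ⟨1, Or.inr (Or.inl rfl), by push_cast; ring⟩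
      · exact ⟨3, Or.inr (Or.inr rfl), by push_cast; ring⟩
    obtain ⟨a, ha, hpa⟩ := hext _ _ hpl
    obtain ⟨b, hb, hqb⟩ := hext _ _ hql
    obtain ⟨c, hc, hpc⟩ := hext _ _ hpm
    obtain ⟨d, hd, hqd⟩ := hext _ _ hqm
    have hab : a ≠ b := by
      rintro rfl; exact hpq (by rw [hpa, hqb])
    have hcd : c ≠ d := by
      rintro rfl; exact hpq (by rw [hpc, hqd])
    have hsum : ((a + d : ℕ) : ZMod (n+7)) = ((c + b : ℕ) : ZMod (n+7)) := by
      push_cast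
      have h1 : p - q = (a : ZMod (n+7)) - b := by rw [hpa, hqb]; ring
      have h2 : p - q = (c : ZMod (n+7)) - d := by rw [hpc, hqd]; ring
      have := h1.symm.trans h2
      linear_combination this
    have hsum' : a + d = c + b := by
      refine castInj n _ _ ?_ ?_ hsum <;> omega
    obtain ⟨hac, -⟩ := keyNat a b c d ha hb hc hd hab hcd hsum'
    subst hac
    have : l + (a : ZMod (n+7)) = m + (a : ZMod (n+7)) := by rw [← hpa, ← hpc]
    exact add_right_cancel this
  · intro p
    have h1 : (1 : ZMod (n+7)) ≠ 0 := by
      intro h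
      have := castInj n 1 0 (by omega) (by omega) (by push_cast; exact h)
      omega
    have h2 : (2 : ZMod (n+7)) ≠ 0 := by
      intro h
      have := castInj n 2 0 (by omega) (by omega) (by push_cast; exact h)
      omega
    have h3 : (3 : ZMod (n+7)) ≠ 0 := by
      intro h
      have := castInj n 3 0 (by omega) (by omega) (by push_cast; exact h)
      omega
    have hset : {l : ZMod (n+7) | p = l ∨ p = l + 1 ∨ p = l + 3} = {p, p - 1, p - 3} := by
      ext l
      simp only [Set.mem_setOf_eq, Set.mem_insert_iff, Set.mem_singleton_iff]
      constructor
      · rintro (rfl|h|h)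
        · exact Or.inl rfl
        · exact Or.inr (Or.inl (by rw [h]; ring))
        · exact Or.inr (Or.inr (by rw [h]; ring))
      · rintro (rfl|rfl|rfl)
        · exact Or.inl rfl
        · exact Or.inr (Or.inl (by ring))
        · exact Or.inr (Or.inr (by ring))
    rw [hset]
    rw [Set.ncard_eq_three]
    refine ⟨p, p - 1, p - 3, ?_, ?_, ?_, rfl⟩
    · intro h; apply h1; linear_combination h
    · intro h; apply h3; linear_combination h
    · intro h; apply h2; linear_combination h
  · intro l
    have h1 : (1 : ZMod (n+7)) ≠ 0 := by
      intro h
      have := castInj n 1 0 (by omega) (by omega) (by push_cast; exact h)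
      omega
    have h2 : (2 : ZMod (n+7)) ≠ 0 := by
      intro h
      have := castInj n 2 0 (by omega) (by omega) (by push_cast; exact h)
      omega
    have h3 : (3 : ZMod (n+7)) ≠ 0 := by
      intro h
      have := castInj n 3 0 (by omega) (by omega) (by push_cast; exact h)
      omega
    have hset : {p : ZMod (n+7) | p = l ∨ p = l + 1 ∨ p = l + 3} = {l, l + 1, l + 3} := by
      ext p; simp [Set.mem_insert_iff]
    rw [hset, Set.ncard_eq_three]
    refine ⟨l, l + 1, l + 3, ?_, ?_, ?_, rfl⟩
    · intro h; apply h1; linear_combination -h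
    · intro h; apply h3; linear_combination -h
    · intro h; apply h2; linear_combination -h

/-- there exists a `v_3`-configuration for every `v ≥ 7`. -/
theorem v3_exists (v : ℕ) (hv : 7 ≤ v) :
    Nonempty (Config (Fin v) (Fin v) 3 3) := by
  obtain ⟨n, rfl⟩ : ∃ n, v = n + 7 := ⟨v - 7, by omega⟩
  exact auxConfig n
end

section
/- Any (v_r, b_k)-configuration with point deficiency δ_p = v - (r(k-1)+1) < k - (r+k)/gcd(r,k), or line deficiency δ_l = b - (k(r-1)+1) < r - (r+k)/gcd(r,k), is irreducible. -/
/-- General reducibility of a `(v_r, b_k)`-configuration: there are a set `R` of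
`k/gcd(r,k)` points and a set `N` of `r/gcd(r,k)` lines, and a bijection `f'` between
the multiset of incidences `(q, n)` with `n ∈ N`, `q` on `n`, `q ∉ R`, and the
multiset of incidences `(m, x)` with `x ∈ R`, `x` on `m`, `m ∉ N`, such that each
such `q` is not collinear with any point of its assigned line except possibly through
a line of `N` or with a point of `R`. -/
def GenReducible {P L : Type} {r k : ℕ} (C : Config P L r k) : Prop :=
  ∃ (R : Set P) (N : Set L) (f' : P × L → L × P),
    R.ncard = k / Nat.gcd r k ∧ N.ncard = r / Nat.gcd r k ∧
    Set.BijOn f' {ql : P × L | ql.2 ∈ N ∧ C.I ql.1 ql.2 ∧ ql.1 ∉ R}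
      {mx : L × P | mx.2 ∈ R ∧ C.I mx.2 mx.1 ∧ mx.1 ∉ N} ∧
    ∀ ql : P × L, ql.2 ∈ N → C.I ql.1 ql.2 → ql.1 ∉ R →
      ∀ x : P, C.I x (f' ql).1 → x ≠ ql.1 → x ∉ R →
        ∀ s : L, C.I ql.1 s → C.I x s → s ∈ N

namespace Config

variable {P L : Type} {r k : ℕ} (C : Config P L r k)

def dual : Config L P k r where
  I l p := C.I p l
  plinear _ _ hlm p q hpl hpm hql hqm := by
    by_contra hpq
    exact hlm (C.plinear p q hpq _ _ hpl hql hpm hqm)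
  pointDeg := C.lineDeg
  lineDeg := C.pointDeg

theorem ncard_collinear [Finite P] [Finite L] (q : P) :
    {y | y ≠ q ∧ ∃ l, C.I q l ∧ C.I y l}.ncard = r * (k - 1) := by
  have hunion : {y | y ≠ q ∧ ∃ l, C.I q l ∧ C.I y l}
      = ⋃ l ∈ {l | C.I q l}, {y | C.I y l} \ {q} := by
    ext y
    simp only [Set.mem_ofPred_eq, Set.mem_iUnion, Set.mem_sdiff, Set.mem_singleton_iff, exists_prop]
    tauto
  have hdisj : Set.PairwiseDisjoint {l | C.I q l} fun l => {y | C.I y l} \ {q} := by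
    intro l hl l' hl' hll'
    refine Set.disjoint_left.2 fun y ⟨hyl, hyq⟩ ⟨hyl', _⟩ => hll' ?_
    exact C.plinear y q hyq l l' hyl hl hyl' hl'
  rw [hunion, (Set.toFinite _).ncard_biUnion (fun _ _ => Set.toFinite _) hdisj,
    finsum_mem_congr rfl fun l hl => by
      rw [Set.ncard_sdiff_singleton_of_mem (show q ∈ {y | C.I y l} from hl), C.lineDeg],
    finsum_mem_eq_finite_toFinset_sum _ (Set.toFinite _), Finset.sum_const, smul_eq_mul,
    ← Set.ncard_eq_toFinset_card _, C.pointDeg]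

theorem le_card_of_noncollinear [Finite P] [Finite L] (q : P) {S : Set P}
    (hS : ∀ y ∈ S, y ≠ q ∧ ¬∃ l, C.I q l ∧ C.I y l) :
    r * (k - 1) + 1 + S.ncard ≤ Nat.card P := by
  set Col := {y | y ≠ q ∧ ∃ l, C.I q l ∧ C.I y l}
  have hsub : S ⊆ (insert q Col)ᶜ := by
    rintro y hy (rfl | ⟨-, hcol⟩)
    exacts [(hS y hy).1 rfl, (hS y hy).2 hcol]
  have hq : q ∉ Col := fun h => h.1 rfl
  rw [← Set.ncard_add_ncard_compl (insert q Col), Set.ncard_insert_of_notMem hq,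
    C.ncard_collinear q]
  exact Nat.add_le_add_left (Set.ncard_le_ncard hsub) _

theorem ncard_incident_meeting_le [Finite L] {m : L} {N : Set L} (hm : m ∉ N) :
    {y | C.I y m ∧ ∃ l ∈ N, C.I y l}.ncard ≤ N.ncard := by
  have : Nonempty L := ⟨m⟩
  choose! g hgN hg using fun y (hy : y ∈ {y | C.I y m ∧ ∃ l ∈ N, C.I y l}) => hy.2
  refine Set.ncard_le_ncard_of_injOn g hgN fun y hy y' hy' hgy => ?_
  by_contra hne
  exact hm (C.plinear y y' hne _ m (hg y hy) (hgy ▸ hg y' hy') hy.1 hy'.1 ▸ hgN y hy)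

/-- The condition a reduction `(R, N, f')` imposes on a point `q` of a line `n ∈ N` with `q ∉ R`
and on the line `m` of `f' (q, n)`. -/
def JoinedWithin (R : Set P) (N : Set L) (q : P) (m : L) : Prop :=
  ∀ y, C.I y m → y ≠ q → y ∉ R → ∀ s, C.I q s → C.I y s → s ∈ N

variable {C}

theorem JoinedWithin.dual {R : Set P} {N : Set L} {q : P} {m : L}
    (h : C.JoinedWithin R N q m) (hqm : ¬C.I q m) : C.dual.JoinedWithin N R m q := by
  intro l hql hlm hlN s hsm hsl
  by_contra hsR
  exact hlN (h s hsm (fun hsq => hqm (hsq ▸ hsm)) hsR l hql hsl)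

theorem JoinedWithin.le_card_points [Finite P] [Finite L] {R : Set P} {N : Set L} {q : P}
    {m : L} (h : C.JoinedWithin R N q m) (hq : ∃ n ∈ N, C.I q n) (hm : m ∉ N) :
    r * (k - 1) + 1 + k ≤ Nat.card P + R.ncard + N.ncard := by
  set G := {y | C.I y m ∧ y ∉ R ∧ ¬∃ l ∈ N, C.I y l}
  have hG : ∀ y ∈ G, y ≠ q ∧ ¬∃ l, C.I q l ∧ C.I y l := by
    rintro y ⟨hym, hyR, hyN⟩
    have hyq : y ≠ q := by
      rintro rfl
      exact hyN hq
    exact ⟨hyq, fun ⟨l, hql, hyl⟩ => hyN ⟨l, h y hym hyq hyR l hql hyl, hyl⟩⟩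
  have hcover : {y | C.I y m} ⊆ G ∪ R ∪ {y | C.I y m ∧ ∃ l ∈ N, C.I y l} := by
    intro y hym
    by_cases hyR : y ∈ R
    · exact Or.inl (Or.inr hyR)
    by_cases hyN : ∃ l ∈ N, C.I y l
    · exact Or.inr ⟨hym, hyN⟩
    · exact Or.inl (Or.inl ⟨hym, hyR, hyN⟩)
  have hk : k ≤ G.ncard + R.ncard + N.ncard := calc
    k = {y | C.I y m}.ncard := (C.lineDeg m).symm
    _ ≤ (G ∪ R ∪ {y | C.I y m ∧ ∃ l ∈ N, C.I y l}).ncard := Set.ncard_le_ncard hcover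
    _ ≤ G.ncard + R.ncard + {y | C.I y m ∧ ∃ l ∈ N, C.I y l}.ncard :=
      (Set.ncard_union_le _ _).trans (Nat.add_le_add_right (Set.ncard_union_le _ _) _)
    _ ≤ G.ncard + R.ncard + N.ncard := Nat.add_le_add_left (C.ncard_incident_meeting_le hm) _
  have hv := C.le_card_of_noncollinear q hG
  omega

theorem JoinedWithin.le_card_lines_of_incident [Finite P] [Finite L] {R : Set P} {N : Set L}
    {q : P} {m : L} (h : C.JoinedWithin R N q m) (hq : ∃ n ∈ N, C.I q n) (hqR : q ∉ R)
    (hm : m ∉ N) (hmR : ∃ x ∈ R, C.I x m) (hqm : C.I q m) :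
    k * (r - 1) + 1 + r ≤ Nat.card L + N.ncard + R.ncard := by
  obtain ⟨n, hnN, hqn⟩ := hq
  obtain ⟨x, hxR, hxm⟩ := hmR
  have hsub : {y | C.I y m} ⊆ insert q R := by
    intro y hym
    by_contra hy
    rw [Set.mem_insert_iff, not_or] at hy
    exact hm (h y hym hy.1 hy.2 m hqm hym)
  have hkR : k ≤ R.ncard + 1 :=
    C.lineDeg m ▸ (Set.ncard_le_ncard hsub).trans (Set.ncard_insert_le q R)
  have hk : 2 ≤ k := by
    have hxq : x ≠ q := fun hxq => hqR (hxq ▸ hxR)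
    have hpair : ({x, q} : Set P) ⊆ {y | C.I y m} := by
      rintro y (rfl | rfl)
      exacts [hxm, hqm]
    simpa only [Set.ncard_pair hxq, C.lineDeg m] using Set.ncard_le_ncard hpair
  obtain ⟨z, hzn, hzq⟩ := Set.exists_ne_of_one_lt_ncard ((C.lineDeg n).symm ▸ hk) q
  have hzm : ¬C.I z m := fun hzm => hm (C.plinear z q hzq n m hzn hqn hzm hqm ▸ hnN)
  -- A line through `z` meets `m` in at most one point, so at most `k` of them meet `m`.
  have hb := (show C.dual.JoinedWithin ∅ {s | C.I s m} m z from fun _ _ _ _ s hs _ => hs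
    ).le_card_points ⟨x, hxm, hxm⟩ hzm
  have hN : 0 < N.ncard := (Set.ncard_pos).2 ⟨n, hnN⟩
  rw [Set.ncard_empty, C.lineDeg m] at hb
  omega

theorem JoinedWithin.le_card_lines [Finite P] [Finite L] {R : Set P} {N : Set L}
    {q : P} {m : L} (h : C.JoinedWithin R N q m) (hq : ∃ n ∈ N, C.I q n) (hqR : q ∉ R)
    (hm : m ∉ N) (hmR : ∃ x ∈ R, C.I x m) :
    k * (r - 1) + 1 + r ≤ Nat.card L + N.ncard + R.ncard := by
  by_cases hqm : C.I q m
  · exact h.le_card_lines_of_incident hq hqR hm hmR hqm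
  · exact (h.dual hqm).le_card_points hmR hqR

theorem exists_joinedWithin_of_mapsTo [Finite P] {R : Set P} {N : Set L} {f' : P × L → L × P}
    (hN : N.Nonempty) (hR : R.ncard < k)
    (hf' : Set.MapsTo f' {ql : P × L | ql.2 ∈ N ∧ C.I ql.1 ql.2 ∧ ql.1 ∉ R}
      {mx : L × P | mx.2 ∈ R ∧ C.I mx.2 mx.1 ∧ mx.1 ∉ N})
    (hcond : ∀ ql : P × L, ql.2 ∈ N → C.I ql.1 ql.2 → ql.1 ∉ R →
      ∀ x : P, C.I x (f' ql).1 → x ≠ ql.1 → x ∉ R →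
        ∀ s : L, C.I ql.1 s → C.I x s → s ∈ N) :
    ∃ q m, C.JoinedWithin R N q m ∧ (∃ n ∈ N, C.I q n) ∧ q ∉ R ∧ m ∉ N ∧ ∃ x ∈ R, C.I x m := by
  obtain ⟨n, hn⟩ := hN
  obtain ⟨q, hqn, hqR⟩ : ∃ q, C.I q n ∧ q ∉ R := by
    by_contra! hsub
    exact hR.not_ge (C.lineDeg n ▸ Set.ncard_le_ncard hsub)
  obtain ⟨hxR, hxm, hmN⟩ := @hf' (q, n) ⟨hn, hqn, hqR⟩
  exact ⟨q, (f' (q, n)).1, fun y hy => hcond (q, n) hn hqn hqR y hy, ⟨n, hn, hqn⟩, hqR, hmN,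
    _, hxR, hxm⟩

end Config

/-- any `(v_r, b_k)`-configuration with point deficiency
`δ_p = v - (r(k-1)+1) < k - (r+k)/gcd(r,k)` or line deficiency
`δ_l = b - (k(r-1)+1) < r - (r+k)/gcd(r,k)` is irreducible. -/
theorem small_deficiency_irreducible {P L : Type} [Fintype P] [Fintype L] {r k : ℕ}
    (hr : 1 ≤ r) (hk : 1 ≤ k) (C : Config P L r k)
    (h : (Fintype.card P : ℤ) - ((r : ℤ) * ((k : ℤ) - 1) + 1)
            < (k : ℤ) - (((r + k) / Nat.gcd r k : ℕ) : ℤ) ∨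
         (Fintype.card L : ℤ) - ((k : ℤ) * ((r : ℤ) - 1) + 1)
            < (r : ℤ) - (((r + k) / Nat.gcd r k : ℕ) : ℤ)) :
    ¬ GenReducible C := by
  rintro ⟨R, N, f', hR, hN, hf', hcond⟩
  have hd : 0 < Nat.gcd r k := Nat.gcd_pos_of_pos_left k hr
  have hNpos : 0 < N.ncard := hN ▸ Nat.div_pos (Nat.gcd_le_left k hr) hd
  have hRpos : 0 < R.ncard := hR ▸ Nat.div_pos (Nat.gcd_le_right (m := r) hk) hd
  have hsum : (r + k) / Nat.gcd r k = N.ncard + R.ncard :=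
    hN ▸ hR ▸ Nat.add_div_of_dvd_right (Nat.gcd_dvd_left r k)
  rw [hsum, ← Nat.card_eq_fintype_card, ← Nat.card_eq_fintype_card] at h
  have hrk : ((r * (k - 1) : ℕ) : ℤ) = r * ((k : ℤ) - 1) := by push_cast [Nat.cast_sub hk]; ring
  have hkr : ((k * (r - 1) : ℕ) : ℤ) = k * ((r : ℤ) - 1) := by push_cast [Nat.cast_sub hr]; ring
  obtain ⟨q0, -⟩ := Set.nonempty_of_ncard_ne_zero hRpos.ne'
  obtain ⟨n0, hn0⟩ := Set.nonempty_of_ncard_ne_zero hNpos.ne'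
  have hP := C.le_card_of_noncollinear q0 (S := ∅) (by simp)
  have hL := C.dual.le_card_of_noncollinear n0 (S := ∅) (by simp)
  have hRk : R.ncard < k := by
    have hgcd : Nat.gcd r k ≠ 1 := fun h1 => by
      rw [h1, Nat.div_one] at hN hR
      omega
    exact hR ▸ Nat.div_lt_self hk (by omega)
  obtain ⟨q, m, hjoin, hqN, hqR, hmN, hmR⟩ :=
    C.exists_joinedWithin_of_mapsTo ⟨n0, hn0⟩ hRk hf'.mapsTo hcond
  rcases h with hp | hl
  · have := hjoin.le_card_points hqN hmN
    omega
  · have := hjoin.le_card_lines hqN hqR hmN hmR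
    omega
end

section
/- In the balanced case, any v_k-configuration with deficiency δ = v - (k(k-1)+1) < k - 2 is irreducible. -/
/-- Boben reducibility of a balanced configuration. -/
def Reducible {P L : Type} {k : ℕ} (C : Config P L k k) : Prop :=
  ∃ (p : P) (l : L) (f' : P → L),
    Set.MapsTo f' {q | C.I q l ∧ q ≠ p} {m | C.I p m ∧ m ≠ l} ∧
    Set.InjOn f' {q | C.I q l ∧ q ≠ p} ∧
    ∀ q, C.I q l → q ≠ p → ∀ x, C.I x (f' q) → x ≠ q → x ≠ p →
      ∀ s, C.I q s → C.I x s → s = l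

/-!
If `(p, l, f')` is a reduction, pick a point `q ≠ p` on `l`. The line `f' q` passes through `p`
and differs from `l`, so at least `k - 2` of its points lie off `p` and `l`, and the reduction
condition makes each of them non-collinear with `q`. Since `q` is collinear with exactly
`k (k - 1)` other points, `v ≥ 1 + k (k - 1) + (k - 2) = k² - 1`, i.e. `δ ≥ k - 2`.
-/

namespace Config

variable {P L : Type} {r k : ℕ} (C : Config P L r k)

def Collinear (x y : P) : Prop := ∃ s, C.I x s ∧ C.I y s

variable [Finite P]

theorem ncard_inter_le_one {l m : L} (hlm : l ≠ m) :
    ({x | C.I x l} ∩ {x | C.I x m}).ncard ≤ 1 :=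
  Set.ncard_le_one_iff_subsingleton.mpr fun x ⟨hxl, hxm⟩ y ⟨hyl, hym⟩ =>
    by_contra fun hxy => hlm (C.plinear x y hxy l m hxl hyl hxm hym)

theorem sub_two_le_ncard_sdiff {l m : L} (hlm : l ≠ m) (p : P) :
    k - 2 ≤ (({x | C.I x m} \ {x | C.I x l}) \ {p}).ncard := by
  have hm := Set.ncard_inter_add_ncard_sdiff_eq_ncard {x | C.I x m} {x | C.I x l}
  have hp := Set.le_ncard_sdiff {p} ({x | C.I x m} \ {x | C.I x l})
  rw [C.lineDeg, Set.inter_comm] at hm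
  rw [Set.ncard_singleton] at hp
  have := C.ncard_inter_le_one hlm
  omega

theorem mul_sub_one_le_ncard_collinear (q : P) :
    r * (k - 1) ≤ {x | x ≠ q ∧ C.Collinear q x}.ncard := by
  rcases Nat.eq_zero_or_pos r with rfl | hr
  · simp
  have hlines : {s | C.I q s}.Finite := Set.finite_of_ncard_pos (by rw [C.pointDeg]; exact hr)
  have hunion :
      {x | x ≠ q ∧ C.Collinear q x} = ⋃ s ∈ {s | C.I q s}, {x | C.I x s} \ {q} := by
    ext x
    simp only [Collinear, Set.mem_ofPred_eq, Set.mem_iUnion, Set.mem_sdiff,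
      Set.mem_singleton_iff, exists_prop]
    tauto
  have hdisj : {s | C.I q s}.PairwiseDisjoint fun s => {x | C.I x s} \ {q} :=
    fun s hs t ht hst => Set.disjoint_left.mpr fun x ⟨hxs, hxq⟩ ⟨hxt, _⟩ =>
      hst (C.plinear q x (Ne.symm hxq) s t hs hxs ht hxt)
  rw [hunion, hlines.ncard_biUnion (fun _ _ => Set.toFinite _) hdisj,
    finsum_mem_congr rfl fun s hs => by
      rw [Set.ncard_sdiff_singleton_of_mem (show q ∈ {x | C.I x s} from hs), C.lineDeg],
    finsum_mem_eq_finite_toFinset_sum _ hlines, Finset.sum_const, smul_eq_mul,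
    ← Set.ncard_eq_toFinset_card _ hlines, C.pointDeg]

theorem one_add_ncard_collinear_add_ncard_not_collinear (q : P) :
    1 + {x | x ≠ q ∧ C.Collinear q x}.ncard + {x | x ≠ q ∧ ¬ C.Collinear q x}.ncard
      = Nat.card P := by
  rw [← Set.ncard_add_ncard_compl {q}, Set.ncard_singleton, add_assoc,
    ← Set.ncard_union_eq]
  · congr 2
    ext x
    simp only [Set.mem_compl_iff, Set.mem_singleton_iff, Set.mem_union, Set.mem_ofPred_eq]
    tauto
  · exact Set.disjoint_left.mpr fun x hx hx' => hx'.2 hx.2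

end Config

namespace Reducible

variable {P L : Type} [Finite P] {k : ℕ} {C : Config P L k k}

theorem exists_sub_two_le_ncard_not_collinear (h : Reducible C) (hk : 2 ≤ k) :
    ∃ q, k - 2 ≤ {x | x ≠ q ∧ ¬ C.Collinear q x}.ncard := by
  obtain ⟨p, l, f', hmaps, -, hred⟩ := h
  obtain ⟨q, hql, hqp⟩ :=
    Set.exists_ne_of_one_lt_ncard (s := {x | C.I x l}) (by rw [C.lineDeg]; omega) p
  obtain ⟨-, hml⟩ := hmaps ⟨hql, hqp⟩
  refine ⟨q, (C.sub_two_le_ncard_sdiff hml.symm p).trans (Set.ncard_le_ncard ?_)⟩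
  rintro x ⟨⟨hxm, hxl⟩, hxp⟩
  have hxq : x ≠ q := by rintro rfl; exact hxl hql
  exact ⟨hxq, fun ⟨s, hqs, hxs⟩ => hxl (hred q hql hqp x hxm hxq hxp s hqs hxs ▸ hxs)⟩

theorem sq_le_card_add_one (h : Reducible C) : k ^ 2 ≤ Nat.card P + 1 := by
  rcases Nat.lt_or_ge k 2 with hk | hk
  · interval_cases k <;> simp
  obtain ⟨q, hq⟩ := h.exists_sub_two_le_ncard_not_collinear hk
  have hcol := C.mul_sub_one_le_ncard_collinear q
  have hcard := C.one_add_ncard_collinear_add_ncard_not_collinear q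
  obtain ⟨j, rfl⟩ := Nat.exists_eq_add_of_le' hk
  simp only [Nat.add_sub_cancel, Nat.add_succ_sub_one] at hq hcol
  nlinarith

end Reducible

theorem balanced_small_deficiency_irreducible_general {P L : Type} [Fintype P]
    {k : ℕ} (C : Config P L k k)
    (hdef : (Fintype.card P : ℤ) - ((k : ℤ) * ((k : ℤ) - 1) + 1) < (k : ℤ) - 2) :
    ¬ Reducible C := fun h => by
  have hk : (k : ℤ) ^ 2 ≤ Fintype.card P + 1 := by
    exact_mod_cast Nat.card_eq_fintype_card (α := P) ▸ h.sq_le_card_add_one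
  nlinarith

/-- any balanced `v_k`-configuration with deficiency
`δ = v - (k(k-1)+1) < k - 2` is irreducible. -/
theorem balanced_small_deficiency_irreducible {P L : Type} [Fintype P] [Fintype L]
    {k : ℕ} (hk : 1 ≤ k) (C : Config P L k k)
    (hbal : Fintype.card P = Fintype.card L)
    (hdef : (Fintype.card P : ℤ) - ((k : ℤ) * ((k : ℤ) - 1) + 1) < (k : ℤ) - 2) :
    ¬ Reducible C :=
  balanced_small_deficiency_irreducible_general C hdef
end

section
/- A resolvable transversal design TD_1(k, n) with k ≥ 3 (equivalently, k ≥ (k+r)/gcd(r,k) + 1 where r = n in the balanced-notation, which for the design viewed as a configuration reduces to k ≥ 3 when r = k) is irreducible. In particular, Pappus' configuration, which is a TD_1(3,3), is irreducible. -/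
/-- a resolvable transversal design `TD_1(k, n)` — a
`(kn_n, n²_k)`-configuration whose points fall into `k` groups of size `n`, every
line meeting each group exactly once, every pair of points from distinct groups on
exactly one line, with the lines partitioned into `n` parallel classes — is
irreducible whenever `k ≥ (k+r)/gcd(r,k) + 1` with `r = n`.
(In particular, Pappus' configuration, a `TD_1(3,3)`, is irreducible.) -/
theorem resolvable_TD_irreducible {P L : Type} [Fintype P] [Fintype L] {k n : ℕ}
    (hk : 1 ≤ k) (hn : 1 ≤ n)
    (C : Config P L n k) (G : P → Fin k)
    (hcard : Fintype.card P = k * n)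
    (hgroup : ∀ i : Fin k, {p : P | G p = i}.ncard = n)
    (hblock : ∀ (l : L) (i : Fin k), ∃! p : P, C.I p l ∧ G p = i)
    (hpair : ∀ p q : P, G p ≠ G q → ∃! l : L, C.I p l ∧ C.I q l)
    (hres : ∃ c : L → Fin n, ∀ (j : Fin n) (p : P), ∃! l : L, c l = j ∧ C.I p l)
    (hineq : (k + n) / Nat.gcd n k + 1 ≤ k) :
    ¬ GenReducible C := by
  rintro ⟨R, N, f', hR, hN, hbij, hcond⟩
  set g := Nat.gcd n k with hg
  have hgpos : 0 < g := Nat.gcd_pos_of_pos_left k hn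
  obtain ⟨a, ha⟩ : g ∣ k := Nat.gcd_dvd_right n k
  obtain ⟨b, hb⟩ : g ∣ n := Nat.gcd_dvd_left n k
  have hkg : k / g = a := by rw [ha, Nat.mul_div_cancel_left a hgpos]
  have hng : n / g = b := by rw [hb, Nat.mul_div_cancel_left b hgpos]
  have hkng : (k + n) / g = a + b := by
    rw [ha, hb, ← Nat.mul_add, Nat.mul_div_cancel_left _ hgpos]
  have ha1 : 1 ≤ a := by
    rcases Nat.eq_zero_or_pos a with h | h
    · subst h; omega
    · exact h
  have hb1 : 1 ≤ b := by
    rcases Nat.eq_zero_or_pos b with h | h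
    · subst h; omega
    · exact h
  rw [hkng] at hineq
  have hstar : a + b + 1 ≤ k := hineq
  have hRcard : R.ncard = a := hR.trans hkg
  have hNcard : N.ncard = b := hN.trans hng
  -- pick a line of N
  have hNne : N.Nonempty := Set.nonempty_of_ncard_ne_zero (by omega)
  obtain ⟨l, hl⟩ := hNne
  haveI : Nonempty L := ⟨l⟩
  -- key tightness lemma for boundary incidences
  have key : ∀ l₀, l₀ ∈ N → ∀ q, C.I q l₀ → q ∉ R →
      (f' (q, l₀)).1 ∉ N ∧
      (∀ p ∈ R, C.I p (f' (q, l₀)).1) ∧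
      (∀ s ∈ N, C.I q s) ∧
      (∃ x, C.I x (f' (q, l₀)).1 ∧ C.I x l₀ ∧ x ∉ R) := by
    intro l₀ hl₀ q hql hqR
    classical
    have hmem : f' (q, l₀) ∈ {mx : L × P | mx.2 ∈ R ∧ C.I mx.2 mx.1 ∧ mx.1 ∉ N} :=
      hbij.mapsTo ⟨hl₀, hql, hqR⟩
    obtain ⟨hx2R, hx2I, hmN⟩ := hmem
    set m := (f' (q, l₀)).1 with hm
    obtain ⟨xq, ⟨hxqm, hxqG⟩, hxq_uniq⟩ := hblock m (G q)
    set S := {p : P | C.I p m} with hS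
    set B := S \ (R ∪ {xq}) with hB
    set φ : P → L :=
      fun x => if h : ∃ s, C.I q s ∧ C.I x s then h.choose else Classical.arbitrary L
      with hφ
    have hφspec : ∀ x ∈ B, C.I q (φ x) ∧ C.I x (φ x) ∧ φ x ∈ N := by
      intro x hx
      obtain ⟨hxS, hxnot⟩ := hx
      have hxR : x ∉ R := fun h => hxnot (Or.inl h)
      have hGx : G x ≠ G q := by
        intro h
        exact hxnot (Or.inr (hxq_uniq x ⟨hxS, h⟩))
      have hex : ∃ s, C.I q s ∧ C.I x s := by
        obtain ⟨s, hs, _⟩ := hpair q x (fun h => hGx h.symm)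
        exact ⟨s, hs⟩
      have h1 : C.I q (φ x) ∧ C.I x (φ x) := by
        have hval : φ x = hex.choose := by simp only [hφ]; exact dif_pos hex
        rw [hval]; exact hex.choose_spec
      have hxq' : x ≠ q := fun h => hGx (by rw [h])
      exact ⟨h1.1, h1.2, hcond (q, l₀) hl₀ hql hqR x hxS hxq' hxR (φ x) h1.1 h1.2⟩
    have hinj : Set.InjOn φ B := by
      intro x hx y hy hxy
      by_contra hne
      obtain ⟨h1, h2, h3⟩ := hφspec x hx
      obtain ⟨h1', h2', h3'⟩ := hφspec y hy
      have heq : φ x = m := C.plinear x y hne (φ x) m h2 (hxy ▸ h2') hx.1 hy.1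
      exact hmN (heq ▸ h3)
    have hsub : S ⊆ (S ∩ R) ∪ ({xq} ∪ B) := by
      intro p hp
      by_cases hpR : p ∈ R
      · exact Or.inl ⟨hp, hpR⟩
      · by_cases hpq : p = xq
        · exact Or.inr (Or.inl hpq)
        · exact Or.inr (Or.inr ⟨hp, fun h => h.elim hpR hpq⟩)
    have hcount : k ≤ (S ∩ R).ncard + (1 + B.ncard) := by
      calc k = S.ncard := (C.lineDeg m).symm
        _ ≤ ((S ∩ R) ∪ ({xq} ∪ B)).ncard := Set.ncard_le_ncard hsub (Set.toFinite _)
        _ ≤ (S ∩ R).ncard + ({xq} ∪ B).ncard := Set.ncard_union_le _ _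
        _ ≤ (S ∩ R).ncard + (({xq} : Set P).ncard + B.ncard) := by
            gcongr
            exact Set.ncard_union_le _ _
        _ = (S ∩ R).ncard + (1 + B.ncard) := by rw [Set.ncard_singleton]
    have hA_le : (S ∩ R).ncard ≤ a := by
      have := Set.ncard_le_ncard (Set.inter_subset_right (s := S) (t := R)) (Set.toFinite R)
      omega
    have himg : φ '' B ⊆ N := by
      rintro s ⟨x, hx, rfl⟩
      exact (hφspec x hx).2.2
    have hB_le : B.ncard ≤ b := by
      have h1 : (φ '' B).ncard = B.ncard := Set.ncard_image_of_injOn hinj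
      have h2 := Set.ncard_le_ncard himg (Set.toFinite N)
      omega
    have hAeq : (S ∩ R).ncard = a := by omega
    have hBeq : B.ncard = b := by omega
    have hRS : S ∩ R = R :=
      Set.eq_of_subset_of_ncard_le (Set.inter_subset_right) (by omega) (Set.toFinite R)
    have hφB : φ '' B = N := by
      refine Set.eq_of_subset_of_ncard_le himg ?_ (Set.toFinite N)
      have h1 : (φ '' B).ncard = B.ncard := Set.ncard_image_of_injOn hinj
      omega
    refine ⟨hmN, ?_, ?_, ?_⟩
    · intro p hp
      have : p ∈ S ∩ R := hRS.symm ▸ hp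
      exact this.1
    · intro s hs
      rw [← hφB] at hs
      obtain ⟨x, hx, rfl⟩ := hs
      exact (hφspec x hx).1
    · have hlB : l₀ ∈ φ '' B := hφB.symm ▸ hl₀
      obtain ⟨x, hx, hxl⟩ := hlB
      exact ⟨x, hx.1, hxl ▸ (hφspec x hx).2.1, fun h => hx.2 (Or.inl h)⟩
  -- a boundary point on l
  have hbd : ∃ q, C.I q l ∧ q ∉ R := by
    by_contra h
    push_neg at h
    have hsub : {p : P | C.I p l} ⊆ R := fun p hp => h p hp
    have := Set.ncard_le_ncard hsub (Set.toFinite R)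
    rw [C.lineDeg l, hRcard] at this
    omega
  obtain ⟨q, hql, hqR⟩ := hbd
  obtain ⟨hmN, hRm, hNq, x₁, hx₁m, hx₁l, hx₁R⟩ := key l hl q hql hqR
  -- no point of R lies on l
  have hRl : ∀ p ∈ R, ¬ C.I p l := by
    intro p hpR hpl
    have hpm := hRm p hpR
    have hne : p ≠ x₁ := fun h => hx₁R (h ▸ hpR)
    have : l = (f' (q, l)).1 := C.plinear p x₁ hne l _ hpl hx₁l hpm hx₁m
    exact hmN (this ▸ hl)
  rcases Nat.lt_or_ge 1 b with hb2 | hbe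
  · -- at least two lines in N
    have hs' : ∃ s ∈ N, s ≠ l := by
      by_contra h
      push_neg at h
      have hsub : N ⊆ {l} := fun s hs => h s hs
      have := Set.ncard_le_ncard hsub (Set.finite_singleton l)
      rw [hNcard, Set.ncard_singleton] at this
      omega
    obtain ⟨s, hsN, hsl⟩ := hs'
    have hq2 : ∃ q', C.I q' l ∧ q' ≠ q := by
      by_contra h
      push_neg at h
      have hsub : {p : P | C.I p l} ⊆ {q} := fun p hp => h p hp
      have := Set.ncard_le_ncard hsub (Set.finite_singleton q)
      rw [C.lineDeg l, Set.ncard_singleton] at this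
      omega
    obtain ⟨q', hq'l, hq'q⟩ := hq2
    have hq'R : q' ∉ R := fun h => hRl q' h hq'l
    have h1 : C.I q s := hNq s hsN
    have h2 : C.I q' s := (key l hl q' hq'l hq'R).2.2.1 s hsN
    exact hsl (C.plinear q' q hq'q s l h2 h1 hq'l hql)
  · -- N = {l}
    have hbe1 : b = 1 := le_antisymm hbe hb1
    have hNsing : N = {l} := by
      obtain ⟨t, ht⟩ := Set.ncard_eq_one.mp (by rw [hNcard, hbe1])
      rw [ht] at hl ⊢
      rw [hl]
    obtain ⟨x₀, hx₀⟩ : R.Nonempty := Set.nonempty_of_ncard_ne_zero (by omega)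
    have hx₀l : ¬ C.I x₀ l := hRl x₀ hx₀
    obtain ⟨c, hc⟩ := hres
    obtain ⟨u, ⟨hcu, hx₀u⟩, _⟩ := hc (c l) x₀
    have hul : u ≠ l := fun h => hx₀l (h ▸ hx₀u)
    have hdisj : ∀ p, C.I p u → ¬ C.I p l := by
      intro p hpu hpl
      obtain ⟨w, _, hwuniq⟩ := hc (c l) p
      have h1 : u = w := hwuniq u ⟨hcu, hpu⟩
      have h2 : l = w := hwuniq l ⟨rfl, hpl⟩
      exact hul (h1.trans h2.symm)
    have huN : u ∉ N := by rw [hNsing]; simpa using hul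
    have hmemT : (u, x₀) ∈ {mx : L × P | mx.2 ∈ R ∧ C.I mx.2 mx.1 ∧ mx.1 ∉ N} :=
      ⟨hx₀, hx₀u, huN⟩
    obtain ⟨⟨q₂, l₂⟩, ⟨hl₂N, hq₂l₂, hq₂R⟩, hfeq⟩ := hbij.surjOn hmemT
    have hl₂ : l₂ = l := by rw [hNsing] at hl₂N; exact hl₂N
    subst hl₂
    obtain ⟨_, _, _, x₂, hx₂m, hx₂l, _⟩ := key l₂ hl q₂ hq₂l₂ hq₂R
    have hfu : (f' (q₂, l₂)).1 = u := congrArg Prod.fst hfeq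
    exact hdisj x₂ (hfu ▸ hx₂m) hx₂l
end
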